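/- arXiv:1706.05279 — 2 statements merged into one kernel-verified Lean document; each statement's English description precedes it below -/
import Mathlib

section
/- For a rooted binary phylogenetic network N on X and any subset S ⊆ X, the phylogenetic net diversity PND(S) is at most the minimum, over all phylogenetic X-trees T displayed by N, of the phylogenetic diversity PD_T(S). -/
open Finset
open scoped Classical

/-- `IsPath E u v p` : `p` is a list of consecutive edges of `E` leading from `u` to `v`. -/
def IsPath {V : Type*} (E : Finset (V × V)) : V → V → List (V × V) → Prop
  | u, v, [] => u = v
  | u, v, e :: p => e ∈ E ∧ e.1 = u ∧ IsPath E e.2 v p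

/-- The vertex `u` lies on the path `p` starting at the vertex `a`. -/
def MemPath {V : Type*} (u a : V) (p : List (V × V)) : Prop :=
  u = a ∨ ∃ e ∈ p, e.2 = u

/-- indegree of a vertex. -/
def inDeg {V : Type*} [DecidableEq V] (E : Finset (V × V)) (v : V) : ℕ :=
  (E.filter fun e => e.2 = v).card

/-- outdegree of a vertex. -/
def outDeg {V : Type*} [DecidableEq V] (E : Finset (V × V)) (v : V) : ℕ :=
  (E.filter fun e => e.1 = v).card

/-- All lists of length `n` with entries in `s`. -/
def listsOf {V : Type*} [DecidableEq V] (s : Finset (V × V)) : ℕ → Finset (List (V × V))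
  | 0 => {[]}
  | n + 1 => s.biUnion fun e => (listsOf s n).image (e :: ·)

/-- The (finite) set of all directed paths from `u` to `v` in an acyclic digraph. -/
noncomputable def allPaths {V : Type*} [Fintype V] [DecidableEq V]
    (E : Finset (V × V)) (u v : V) : Finset (List (V × V)) :=
  ((Finset.range (Fintype.card V + 1)).biUnion (listsOf E)).filter (IsPath E u v)

/-- A rooted binary phylogenetic network on the taxon set `X`, with vertex set `V`,
edge lengths and inheritance probabilities. -/
structure PhyloNetwork (V X : Type*) [Fintype V] [DecidableEq V] [Fintype X] where
  E : Finset (V × V)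
  root : V
  len : V × V → ℝ
  prob : V × V → ℝ
  leafOf : X → V
  leafOf_inj : Function.Injective leafOf
  root_in : inDeg E root = 0
  root_out : outDeg E root = 2
  leaf_iff : ∀ v, outDeg E v = 0 ↔ ∃ x, leafOf x = v
  leaf_in : ∀ x, inDeg E (leafOf x) = 1
  internal : ∀ v, v ≠ root → outDeg E v ≠ 0 →
      (inDeg E v = 1 ∧ outDeg E v = 2) ∨ (inDeg E v = 2 ∧ outDeg E v = 1)
  reach : ∀ v, ∃ p, IsPath E root v p
  acyclic : ∀ (v : V) (p : List (V × V)), p ≠ [] → ¬ IsPath E v v p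
  len_nonneg : ∀ e ∈ E, 0 ≤ len e
  len_pos_tree : ∀ e ∈ E, inDeg E e.2 ≤ 1 → 0 < len e
  len_retic : ∀ e ∈ E, inDeg E e.2 = 2 → len e = 0
  prob_tree : ∀ e ∈ E, inDeg E e.2 ≤ 1 → prob e = 1
  prob_pos : ∀ e ∈ E, 0 < prob e
  prob_lt_one : ∀ e ∈ E, inDeg E e.2 = 2 → prob e < 1
  prob_sum : ∀ v, inDeg E v = 2 → ∑ e ∈ E.filter (fun e => e.2 = v), prob e = 1

namespace PhyloNetwork

variable {V X : Type*} [Fintype V] [DecidableEq V] [Fintype X] [DecidableEq X]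
variable (N : PhyloNetwork V X)

/-- Probability of a directed path: the product of the probabilities of its edges. -/
noncomputable def pathProb (p : List (V × V)) : ℝ := (p.map N.prob).prod

/-- Total weight (sum of branch lengths) of a set of edges. -/
noncomputable def weight (A : Finset (V × V)) : ℝ := ∑ e ∈ A, N.len e

/-- A switching keeps exactly one incoming edge of every non-root vertex, i.e. it
deletes exactly one of the two incoming reticulation edges of each reticulation node
and keeps all tree edges. -/
def IsSwitching (F : Finset (V × V)) : Prop :=
  F ⊆ N.E ∧ ∀ v, v ≠ N.root → (F.filter fun e => e.2 = v).card = 1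

/-- The switching yields a phylogenetic `X`-tree: every dead end is a labeled leaf. -/
def IsValidSwitching (F : Finset (V × V)) : Prop :=
  N.IsSwitching F ∧ ∀ v, outDeg F v = 0 → ∃ x, N.leafOf x = v

/-- The (multi)set `T(N)` of phylogenetic `X`-trees displayed by `N`, each tree being
encoded by the switching producing it. -/
noncomputable def displayed : Finset (Finset (V × V)) :=
  N.E.powerset.filter N.IsValidSwitching

/-- The set of leaves lying below the edge `e` inside the subgraph `F`. -/
noncomputable def clusterIn (F : Finset (V × V)) (e : V × V) : Finset X :=
  Finset.univ.filter fun x => ∃ p, IsPath F e.2 (N.leafOf x) p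

/-- Phylogenetic diversity of `S` in the tree displayed by the switching `F`
(the sum of the lengths of the edges of the minimal subtree spanning `S` and the root;
suppression of degree-two vertices merges edge lengths additively, so it is computed
on the unsuppressed switching). -/
noncomputable def PDdisp (F : Finset (V × V)) (S : Finset X) : ℝ :=
  ∑ e ∈ F.filter (fun e => (N.clusterIn F e ∩ S).Nonempty), N.len e

/-- Unscaled probability of the tree displayed by the switching `F`: the product of the
inheritance probabilities of the kept reticulation edges. -/
noncomputable def Punsc (F : Finset (V × V)) : ℝ :=
  ∏ e ∈ F.filter (fun e => inDeg N.E e.2 = 2), N.prob e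

/-- `v` is a vertex of the edge set `A`. -/
def vertexOf (A : Finset (V × V)) (v : V) : Prop := ∃ e ∈ A, e.1 = v ∨ e.2 = v

/-- `A` is an arborescence rooted at the root of `N` inside `N`: there is exactly one
directed path from the root to each of its vertices. -/
def IsArbor (A : Finset (V × V)) : Prop :=
  A ⊆ N.E ∧ ∀ v, vertexOf A v → (allPaths A N.root v).card = 1

/-- `A` contains all taxa of `S`. -/
def spans (A : Finset (V × V)) (S : Finset X) : Prop :=
  ∀ x ∈ S, vertexOf A (N.leafOf x)

/-- Phylogenetic net diversity: the weight of a minimum cost arborescence containing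
`S` and the root. -/
noncomputable def PND (S : Finset X) : ℝ :=
  sInf {w : ℝ | ∃ A, N.IsArbor A ∧ N.spans A S ∧ w = N.weight A}

/-- Phylogenetic subnet diversity: the total weight of the subgraph of `N` consisting of
all edges lying on some directed path from the root to a leaf of `S`. -/
noncomputable def PSD (S : Finset X) : ℝ :=
  ∑ e ∈ N.E.filter (fun e => ∃ x ∈ S, ∃ p, IsPath N.E N.root (N.leafOf x) p ∧ e ∈ p), N.len e

/-- Probability that the leaf `d` is a descendant of the node `v`: the sum of the
probabilities of all directed paths from `v` to `d`. -/
noncomputable def Pdesc (v : V) (d : X) : ℝ :=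
  ∑ p ∈ allPaths N.E v (N.leafOf d), N.pathProb p

/-- The set of leaves that are descendants of the edge `e`. -/
noncomputable def De (e : V × V) : Finset X :=
  Finset.univ.filter fun x => ∃ p, IsPath N.E e.2 (N.leafOf x) p

/-- Net Fair Proportion Index of the taxon `a`. -/
noncomputable def NFP (a : X) : ℝ :=
  ∑ p ∈ allPaths N.E N.root (N.leafOf a),
    N.pathProb p * (p.map (fun e => N.len e / ∑ d ∈ N.De e, N.Pdesc e.2 d)).sum

end PhyloNetwork

/-- The original Shapley Value of a set function `f` (with `f ∅ = 0`). -/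
noncomputable def shapley {X : Type*} [Fintype X] [DecidableEq X]
    (f : Finset X → ℝ) (a : X) : ℝ :=
  (1 / (Nat.factorial (Fintype.card X) : ℝ)) *
    ∑ S ∈ Finset.univ.powerset.filter (fun S : Finset X => a ∈ S),
      ((S.card - 1).factorial : ℝ) * ((Fintype.card X - S.card).factorial : ℝ) *
        (f S - f (S.erase a))

/-! Each displayed tree comes from a switching `F`: a choice of one incoming edge of `N` for
every non-root vertex. `F` is acyclic because `N` is, so every vertex has a unique path from the
root in `F`. The edges of `F` lying above some taxon of `S` are closed under taking ancestors,
hence form an arborescence of `N` containing the root and `S`, and their total length is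
`PD_T(S)` by definition. `PND(S)`, the minimum over all such arborescences, is therefore at most
`PD_T(S)` for every displayed tree `T`. -/

section Paths

variable {V : Type*} {E F : Finset (V × V)}

@[simp] lemma isPath_nil {u v : V} : IsPath E u v [] ↔ u = v := Iff.rfl

@[simp] lemma isPath_cons {u v : V} {e : V × V} {p : List (V × V)} :
    IsPath E u v (e :: p) ↔ e ∈ E ∧ e.1 = u ∧ IsPath E e.2 v p := Iff.rfl

lemma isPath_append_iff :
    ∀ {u w : V} {p q : List (V × V)},
      IsPath E u w (p ++ q) ↔ ∃ v, IsPath E u v p ∧ IsPath E v w q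
  | u, w, [], q => by simp
  | u, w, e :: p, q => by
    simp only [List.cons_append, isPath_cons, isPath_append_iff]
    tauto

lemma isPath_concat_iff {u v : V} {p : List (V × V)} {e : V × V} :
    IsPath E u v (p ++ [e]) ↔ IsPath E u e.1 p ∧ e ∈ E ∧ e.2 = v := by
  simp only [isPath_append_iff, isPath_cons, isPath_nil]
  constructor
  · rintro ⟨w, hp, he, rfl, rfl⟩
    exact ⟨hp, he, rfl⟩
  · rintro ⟨hp, he, rfl⟩
    exact ⟨e.1, hp, he, rfl, rfl⟩

namespace IsPath

lemma edge_mem : ∀ {u v : V} {p : List (V × V)}, IsPath E u v p → ∀ e ∈ p, e ∈ E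
  | _, _, e :: _, h, f, hf => by
    rcases List.mem_cons.1 hf with rfl | hf
    exacts [h.1, edge_mem h.2.2 f hf]

lemma restrict : ∀ {u v : V} {p : List (V × V)}, IsPath E u v p → (∀ e ∈ p, e ∈ F) →
    IsPath F u v p
  | _, _, [], h, _ => h
  | _, _, e :: _, h, hF =>
    ⟨hF e List.mem_cons_self, h.2.1, restrict h.2.2 fun f hf => hF f (List.mem_cons_of_mem _ hf)⟩

lemma mono {u v : V} {p : List (V × V)} (h : IsPath E u v p) (hEF : E ⊆ F) : IsPath F u v p :=
  h.restrict fun e he => hEF (h.edge_mem e he)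

lemma append {u v w : V} {p q : List (V × V)} (hp : IsPath E u v p) (hq : IsPath E v w q) :
    IsPath E u w (p ++ q) :=
  isPath_append_iff.2 ⟨v, hp, hq⟩

end IsPath

def IsAcyclic (E : Finset (V × V)) : Prop :=
  ∀ (v : V) (p : List (V × V)), p ≠ [] → ¬ IsPath E v v p

lemma IsAcyclic.subset (hE : IsAcyclic E) (hFE : F ⊆ E) : IsAcyclic F :=
  fun v p hp h => hE v p hp (h.mono hFE)

lemma IsPath.nodup (hE : IsAcyclic E) :
    ∀ {u v : V} {p : List (V × V)}, IsPath E u v p → (u :: p.map Prod.snd).Nodup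
  | u, _, [], _ => List.nodup_singleton u
  | u, v, e :: p, h => by
    refine List.nodup_cons.2 ⟨fun hu => ?_, nodup hE h.2.2⟩
    obtain ⟨g, hg, rfl⟩ := List.mem_map.1 hu
    obtain ⟨s, t, hst⟩ := List.mem_iff_append.1 hg
    rw [hst, isPath_append_iff] at h
    obtain ⟨w, hs, hgE, hg1, -⟩ := h
    exact hE g.2 (s ++ [g]) (by simp) (isPath_concat_iff.2 ⟨hg1 ▸ hs, hgE, rfl⟩)

lemma IsPath.length_lt [Fintype V] (hE : IsAcyclic E) {u v : V} {p : List (V × V)}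
    (h : IsPath E u v p) : p.length < Fintype.card V := by
  simpa using (h.nodup hE).length_le_card

end Paths

section Graphs

variable {V : Type*} [DecidableEq V] {E : Finset (V × V)} {r : V}

lemma mem_listsOf {s : Finset (V × V)} :
    ∀ {n : ℕ} {p : List (V × V)}, p ∈ listsOf s n ↔ p.length = n ∧ ∀ e ∈ p, e ∈ s
  | 0, p => by simp +contextual [listsOf, List.length_eq_zero_iff]
  | n + 1, [] => by simp [listsOf]
  | n + 1, e :: p => by simp [listsOf, mem_listsOf, and_assoc, and_left_comm]

lemma inDeg_mono {A E : Finset (V × V)} (h : A ⊆ E) (v : V) : inDeg A v ≤ inDeg E v :=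
  card_le_card (filter_subset_filter _ h)

lemma IsPath.eq_of_inDeg_le_one (hE : IsAcyclic E) (hin : ∀ v, v ≠ r → inDeg E v ≤ 1)
    {v : V} {p q : List (V × V)} (hp : IsPath E r v p) (hq : IsPath E r v q) : p = q := by
  induction p using List.reverseRecOn generalizing v q with
  | nil =>
    subst hp
    rcases List.eq_nil_or_concat' q with rfl | ⟨q', f, rfl⟩
    · rfl
    · exact absurd hq (hE r _ (by simp))
  | append_singleton p e ih =>
    obtain ⟨hp', heE, rfl⟩ := isPath_concat_iff.1 hp
    have hr : e.2 ≠ r := fun h => hE r _ (by simp) (h ▸ hp)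
    rcases List.eq_nil_or_concat' q with rfl | ⟨q', f, rfl⟩
    · exact absurd hq.symm hr
    obtain ⟨hq', hfE, hf⟩ := isPath_concat_iff.1 hq
    obtain rfl : f = e :=
      card_le_one.1 (hin e.2 hr) f (mem_filter.2 ⟨hfE, hf⟩) e (mem_filter.2 ⟨heE, rfl⟩)
    rw [ih hp' hq']

variable [Fintype V]

lemma mem_allPaths {u v : V} {p : List (V × V)} :
    p ∈ allPaths E u v ↔ IsPath E u v p ∧ p.length ≤ Fintype.card V := by
  simp only [allPaths, mem_filter, mem_biUnion, mem_range, mem_listsOf]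
  constructor
  · rintro ⟨⟨n, hn, rfl, -⟩, h⟩
    exact ⟨h, by omega⟩
  · rintro ⟨h, hl⟩
    exact ⟨⟨p.length, by omega, rfl, h.edge_mem⟩, h⟩

lemma exists_isPath_of_inDeg_pos (hE : IsAcyclic E) (hin : ∀ v, v ≠ r → 0 < inDeg E v)
    (v : V) : ∃ p, IsPath E r v p := by
  -- Walking backwards along incoming edges either reaches `r` or builds arbitrarily long paths.
  have walk : ∀ n (v : V), (∃ p, IsPath E r v p) ∨ ∃ w p, p.length = n ∧ IsPath E w v p := by
    intro n
    induction n with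
    | zero => exact fun v => Or.inr ⟨v, [], rfl, rfl⟩
    | succ n ih =>
      intro v
      by_cases hv : v = r
      · exact Or.inl ⟨[], hv.symm⟩
      obtain ⟨e, he⟩ := card_pos.1 (hin v hv)
      obtain ⟨heE, rfl⟩ := mem_filter.1 he
      rcases ih e.1 with ⟨p, hp⟩ | ⟨w, p, rfl, hp⟩
      · exact Or.inl ⟨p ++ [e], isPath_concat_iff.2 ⟨hp, heE, rfl⟩⟩
      · exact Or.inr ⟨w, p ++ [e], by simp, isPath_concat_iff.2 ⟨hp, heE, rfl⟩⟩
  rcases walk (Fintype.card V + 1) v with h | ⟨w, p, hl, hp⟩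
  · exact h
  · have := hp.length_lt hE
    omega

lemma card_allPaths_eq_one (hE : IsAcyclic E) (hin : ∀ v, v ≠ r → inDeg E v ≤ 1) {v : V}
    {p : List (V × V)} (hp : IsPath E r v p) : (allPaths E r v).card = 1 :=
  card_eq_one.2 ⟨p, eq_singleton_iff_unique_mem.2 ⟨mem_allPaths.2 ⟨hp, (hp.length_lt hE).le⟩,
    fun _ hq => (mem_allPaths.1 hq).1.eq_of_inDeg_le_one hE hin hp⟩⟩

end Graphs

namespace PhyloNetwork

variable {V X : Type*} [Fintype V] [DecidableEq V] [Fintype X]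
variable (N : PhyloNetwork V X) {F : Finset (V × V)} {S : Finset X}

lemma leafOf_ne_root (x : X) : N.leafOf x ≠ N.root := fun h => by
  simpa [h, N.root_out] using (N.leaf_iff (N.leafOf x)).2 ⟨x, rfl⟩

lemma isAcyclic_of_subset (hF : F ⊆ N.E) : IsAcyclic F :=
  fun v p hp h => N.acyclic v p hp (h.mono hF)

lemma PND_le_weight {A : Finset (V × V)} (hA : N.IsArbor A) (hS : N.spans A S) :
    N.PND S ≤ N.weight A :=
  csInf_le ⟨0, fun _ ⟨_, hB, _, hw⟩ => hw ▸ sum_nonneg fun e he => N.len_nonneg e (hB.1 he)⟩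
    ⟨A, hA, hS, rfl⟩

variable [DecidableEq X]

/-- The minimal subtree of the tree displayed by the switching `F` that spans `S` and the root. -/
noncomputable def spanningSubtree (F : Finset (V × V)) (S : Finset X) : Finset (V × V) :=
  F.filter fun e => (N.clusterIn F e ∩ S).Nonempty

lemma weight_spanningSubtree : N.weight (N.spanningSubtree F S) = N.PDdisp F S := rfl

lemma mem_spanningSubtree_of_isPath {e f : V × V} {t : List (V × V)}
    (he : e ∈ N.spanningSubtree F S) (hf : f ∈ F) (ht : IsPath F f.2 e.2 t) :
    f ∈ N.spanningSubtree F S := by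
  obtain ⟨-, x, hx⟩ := mem_filter.1 he
  obtain ⟨hxe, hxS⟩ := mem_inter.1 hx
  obtain ⟨q, hq⟩ := (mem_filter.1 hxe).2
  exact mem_filter.2 ⟨hf, x, mem_inter.2 ⟨mem_filter.2 ⟨mem_univ x, t ++ q, ht.append hq⟩, hxS⟩⟩

lemma forall_mem_spanningSubtree_of_isPath {e : V × V} {u : V} {p : List (V × V)}
    (he : e ∈ N.spanningSubtree F S) (hp : IsPath F u e.2 p) :
    ∀ f ∈ p, f ∈ N.spanningSubtree F S := by
  intro f hf
  obtain ⟨s, t, rfl⟩ := List.mem_iff_append.1 hf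
  obtain ⟨w, -, hfF, -, ht⟩ := isPath_append_iff.1 hp
  exact N.mem_spanningSubtree_of_isPath he hfF ht

lemma isArbor_spanningSubtree (hF : N.IsSwitching F) : N.IsArbor (N.spanningSubtree F S) := by
  have hsub : N.spanningSubtree F S ⊆ F := filter_subset _ _
  have hacyc : IsAcyclic F := N.isAcyclic_of_subset hF.1
  have hin : ∀ w, w ≠ N.root → inDeg (N.spanningSubtree F S) w ≤ 1 :=
    fun w hw => (inDeg_mono hsub w).trans (hF.2 w hw).le
  refine ⟨hsub.trans hF.1, fun v ⟨e, he, hv⟩ => ?_⟩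
  obtain ⟨q, hq⟩ := exists_isPath_of_inDeg_pos hacyc (fun w hw => (hF.2 w hw).ge) e.1
  have hqe : IsPath F N.root e.2 (q ++ [e]) := isPath_concat_iff.2 ⟨hq, hsub he, rfl⟩
  have hall := N.forall_mem_spanningSubtree_of_isPath he hqe
  rcases hv with rfl | rfl
  · exact card_allPaths_eq_one (hacyc.subset hsub) hin
      (hq.restrict fun f hf => hall f (List.mem_append_left _ hf))
  · exact card_allPaths_eq_one (hacyc.subset hsub) hin (hqe.restrict hall)

lemma spans_spanningSubtree (hF : N.IsSwitching F) : N.spans (N.spanningSubtree F S) S := by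
  intro x hx
  obtain ⟨e, he⟩ := card_pos.1 (hF.2 _ (N.leafOf_ne_root x)).ge
  obtain ⟨heF, he2⟩ := mem_filter.1 he
  refine ⟨e, mem_filter.2 ⟨heF, x, mem_inter.2 ⟨?_, hx⟩⟩, Or.inr he2⟩
  exact mem_filter.2 ⟨mem_univ x, [], he2⟩

lemma PND_le_PDdisp (hF : N.IsSwitching F) : N.PND S ≤ N.PDdisp F S :=
  N.weight_spanningSubtree ▸
    N.PND_le_weight (N.isArbor_spanningSubtree hF) (N.spans_spanningSubtree hF)

end PhyloNetwork

/-- the phylogenetic net diversity of `S` is at most the minimum, over all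
phylogenetic `X`-trees displayed by `N`, of the phylogenetic diversity of `S`. -/
theorem PND_le_min_embedded_PD {V X : Type*} [Fintype V] [DecidableEq V] [Fintype X] [DecidableEq X] (N : PhyloNetwork V X) (S : Finset X)
    (hne : N.displayed.Nonempty) :
    N.PND S ≤ N.displayed.inf' hne (fun F => N.PDdisp F S) :=
  le_inf' hne _ fun _ hF => N.PND_le_PDdisp (mem_filter.1 hF).2.1
end

section
/- For a rooted phylogenetic tree T on X with positive edge lengths, the original Shapley Value of each taxon equals its Fair Proportion Index: SV_T(a) = FP_T(a) for all a ∈ X. -/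
/-!
The phylogenetic diversity is the combination `PD = ∑_C λ_C • v_C` over the edge clusters of the
dual unanimity games `v_C S = [C ∩ S ≠ ∅]`, and the Shapley value is linear. In `v_C` the taxon `a`
contributes exactly to the coalitions `S` with `C ∩ S = {a}`, i.e. `S = insert a R` with `R ⊆ Cᶜ`;
summing the Shapley weights over these (hockey-stick identity) gives `1 / |C|` when `a ∈ C`.
So `a` receives `λ_C / |C|` from each edge above it, which is `FP a`.
-/

open Finset
open scoped Classical

/-- A rooted phylogenetic `X`-tree with positive edge lengths, encoded by its set of
edge clusters: each edge of the tree corresponds to the nonempty set of leaves below it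
(the clusters form a laminar family containing all singletons), and carries a length. -/
structure RPhyloTree (X : Type*) [Fintype X] [DecidableEq X] where
  clusters : Finset (Finset X)
  len : Finset X → ℝ
  cluster_nonempty : ∀ C ∈ clusters, C.Nonempty
  laminar : ∀ C ∈ clusters, ∀ D ∈ clusters, C ⊆ D ∨ D ⊆ C ∨ Disjoint C D
  singleton_mem : ∀ a : X, {a} ∈ clusters
  len_pos : ∀ C ∈ clusters, 0 < len C

namespace RPhyloTree

variable {X : Type*} [Fintype X] [DecidableEq X] (T : RPhyloTree X)

/-- Phylogenetic diversity of `S`: the total length of the minimal subtree spanning `S`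
and the root, i.e. the sum of the lengths of all edges having a leaf of `S` below them. -/
noncomputable def PD (S : Finset X) : ℝ :=
  ∑ C ∈ T.clusters.filter (fun C => (C ∩ S).Nonempty), T.len C

/-- Fair Proportion Index of the taxon `a`: the sum, over the edges on the root-to-`a`
path (i.e. the edges whose cluster contains `a`), of the edge length divided by the
number of leaves below the edge. -/
noncomputable def FP (a : X) : ℝ :=
  ∑ C ∈ T.clusters.filter (fun C => a ∈ C), T.len C / C.card

end RPhyloTree

open Nat in
theorem Nat.succ_mul_sum_choose_mul_factorial_mul_factorial (k m : ℕ) :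
    (k + 1) * ∑ j ∈ range (m + 1), m.choose j * j ! * (k + m - j)! = (k + m + 1)! := by
  have hterm : ∀ j ∈ range (m + 1),
      m.choose j * j ! * (k + m - j)! = m ! * k ! * (m - j + k).choose k := by
    intro j hj
    have hjm : j ≤ m := Nat.lt_succ_iff.mp (mem_range.mp hj)
    rw [show k + m - j = m - j + k by omega, ← add_choose_mul_factorial_mul_factorial,
      ← choose_mul_factorial_mul_factorial hjm]
    ring
  have hreflect := sum_range_reflect (fun i => (i + k).choose k) (m + 1)
  rw [add_tsub_cancel_right] at hreflect
  have hfactorial := add_choose_mul_factorial_mul_factorial m (k + 1)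
  rw [← add_assoc, factorial_succ] at hfactorial
  rw [sum_congr rfl hterm, ← mul_sum, hreflect, sum_range_add_choose, add_comm k m, ← hfactorial]
  ring

open Nat in
theorem Finset.card_mul_sum_inter_eq_singleton_factorial {X : Type*} [Fintype X] [DecidableEq X]
    {C : Finset X} {a : X} (ha : a ∈ C) :
    #C * ∑ S with C ∩ S = {a}, (#S - 1)! * (Fintype.card X - #S)! = (Fintype.card X)! := by
  obtain ⟨k, hk⟩ : ∃ k, #C = k + 1 := Nat.exists_eq_add_one.mpr (card_pos.mpr ⟨a, ha⟩)
  have hcard : Fintype.card X = k + #Cᶜ + 1 := by rw [← card_add_card_compl C]; omega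
  have hinsert : ∑ S with C ∩ S = {a}, (#S - 1)! * (Fintype.card X - #S)!
      = ∑ R ∈ Cᶜ.powerset, (#R)! * (k + #Cᶜ - #R)! := by
    have hmem {S : Finset X} (hS : C ∩ S = {a}) : a ∈ S ∧ ∀ x ∈ S, x ∈ C → x = a := by
      simp only [Finset.ext_iff, mem_inter, mem_singleton] at hS
      exact ⟨((hS a).mpr rfl).2, fun x hxS hxC => (hS x).mp ⟨hxC, hxS⟩⟩
    refine sum_nbij' (·.erase a) (insert a) ?_ ?_ ?_ ?_ ?_ <;>
      simp only [mem_filter, mem_univ, true_and, mem_powerset, subset_iff, mem_compl]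
    · intro S hS x hx hxC
      exact (mem_erase.mp hx).1 ((hmem hS).2 x (mem_erase.mp hx).2 hxC)
    · intro R hR
      grind
    · intro S hS
      exact insert_erase (hmem hS).1
    · intro R hR
      exact erase_insert fun haR => hR haR ha
    · intro S hS
      have hS_pos := card_pos.mpr ⟨a, (hmem hS).1⟩
      rw [card_erase_of_mem (hmem hS).1, hcard]
      congr 2
      omega
  rw [hinsert, sum_powerset_apply_card (fun j => j ! * (k + #Cᶜ - j)!), hk, hcard]
  simp only [smul_eq_mul, ← mul_assoc]
  exact Nat.succ_mul_sum_choose_mul_factorial_mul_factorial k #Cᶜ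

section DualUnanimityGame

variable {X : Type*} [DecidableEq X]

def dualUnanimityGame (C S : Finset X) : ℝ := if (C ∩ S).Nonempty then 1 else 0

theorem dualUnanimityGame_sub_erase (C S : Finset X) (a : X) :
    dualUnanimityGame C S - dualUnanimityGame C (S.erase a) = if C ∩ S = {a} then 1 else 0 := by
  rw [dualUnanimityGame, dualUnanimityGame, inter_erase]
  by_cases h : C ∩ S = {a}
  · simp [h]
  · simp only [h, if_false, nonempty_iff_ne_empty, ne_eq, erase_eq_empty_iff]
    split_ifs <;> simp_all

end DualUnanimityGame

section Shapley

variable {X : Type*} [Fintype X] [DecidableEq X]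

theorem shapley_sum_mul {ι : Type*} (s : Finset ι) (w : ι → ℝ) (f : ι → Finset X → ℝ) (a : X) :
    shapley (fun S => ∑ i ∈ s, w i * f i S) a = ∑ i ∈ s, w i * shapley (f i) a := by
  simp only [shapley, ← sum_sub_distrib, ← mul_sub, mul_sum]
  rw [sum_comm]
  refine sum_congr rfl fun i _ => sum_congr rfl fun S _ => ?_
  ring

open Nat in
theorem shapley_dualUnanimityGame (C : Finset X) (a : X) :
    shapley (dualUnanimityGame C) a = if a ∈ C then (#C : ℝ)⁻¹ else 0 := by
  have hmarginal : ∑ S ∈ univ.powerset.filter (a ∈ ·), ((#S - 1)! : ℝ) * (Fintype.card X - #S)! *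
        (dualUnanimityGame C S - dualUnanimityGame C (S.erase a))
      = ∑ S with C ∩ S = {a}, ((#S - 1)! : ℝ) * (Fintype.card X - #S)! := by
    rw [powerset_univ, sum_filter, sum_filter]
    refine sum_congr rfl fun S _ => ?_
    rw [dualUnanimityGame_sub_erase]
    by_cases h : C ∩ S = {a}
    · simp [h, (mem_inter.mp (h ▸ mem_singleton_self a)).2]
    · simp [h]
  rw [shapley, hmarginal]
  split_ifs with ha
  · have hweights := congrArg (Nat.cast : ℕ → ℝ) (card_mul_sum_inter_eq_singleton_factorial ha)
    push_cast at hweights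
    have hsum := right_ne_zero_of_mul (hweights.trans_ne (by positivity))
    rw [← hweights]
    field_simp
  · refine mul_eq_zero_of_right _ (sum_eq_zero fun S hS => absurd ?_ ha)
    exact (mem_inter.mp ((mem_filter.mp hS).2 ▸ mem_singleton_self a)).1

end Shapley

theorem RPhyloTree.PD_eq_sum_mul_dualUnanimityGame {X : Type*} [Fintype X] [DecidableEq X]
    (T : RPhyloTree X) (S : Finset X) :
    T.PD S = ∑ C ∈ T.clusters, T.len C * dualUnanimityGame C S := by
  rw [PD, sum_filter]
  exact sum_congr rfl fun C _ => by rw [dualUnanimityGame, mul_ite, mul_one, mul_zero]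

/-- on a rooted phylogenetic tree, the original Shapley Value of each
taxon equals its Fair Proportion Index. -/
theorem shapley_eq_FP {X : Type*} [Fintype X] [DecidableEq X]
    (T : RPhyloTree X) (a : X) :
    shapley T.PD a = T.FP a := by
  rw [funext T.PD_eq_sum_mul_dualUnanimityGame, shapley_sum_mul, RPhyloTree.FP, sum_filter]
  refine sum_congr rfl fun C _ => ?_
  rw [shapley_dualUnanimityGame, mul_ite, mul_zero, div_eq_mul_inv]
end
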